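/- arXiv:1603.09333 — 3 statements merged into one kernel-verified Lean document; each statement's English description precedes it below -/
import Mathlib

section
/- Let S be a finite semigroup that admits an injective semigroup homomorphism into a direct product C × N of a finite Clifford semigroup C and a finite nilpotent semigroup N. Then S is an ideal extension of a Clifford semigroup by a nilpotent semigroup: there exist an ideal J of S that is a Clifford semigroup and d ∈ ℕ such that every product of d elements of S lies in J. -/
/-- Product of a nonempty list of semigroup elements: `a * l₁ * l₂ * ⋯`. -/
def sgProd {S : Type*} [Semigroup S] (a : S) (l : List S) : S :=
  l.foldl (· * ·) a

/-- `spow a m = a ^ m` for `m ≥ 1` (with junk value `a` at `m = 0`). -/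
def spow {S : Type*} [Semigroup S] (a : S) : ℕ → S
  | 0 => a
  | 1 => a
  | (n + 2) => spow a (n + 1) * a

/-- A (two-sided) ideal of a semigroup: a nonempty subset absorbing
multiplication on both sides. -/
def IsIdeal {S : Type*} [Semigroup S] (I : Set S) : Prop :=
  I.Nonempty ∧ ∀ s : S, ∀ x ∈ I, s * x ∈ I ∧ x * s ∈ I

/-- A subset of a semigroup that is a subsemigroup which is a group. -/
def IsGroupSubset {S : Type*} [Semigroup S] (G : Set S) : Prop :=
  (∀ x ∈ G, ∀ y ∈ G, x * y ∈ G) ∧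
    ∃ e ∈ G, (∀ x ∈ G, e * x = x ∧ x * e = x) ∧
      ∀ x ∈ G, ∃ y ∈ G, x * y = e ∧ y * x = e

/-- A subset of a semigroup that is a Clifford semigroup in its own right:
it is closed under multiplication, completely regular (every element lies in a
subsemigroup which is a group), and its idempotents are central in it. -/
def IsCliffordSubset {S : Type*} [Semigroup S] (C : Set S) : Prop :=
  (∀ x ∈ C, ∀ y ∈ C, x * y ∈ C) ∧
    (∀ x ∈ C, ∃ G ⊆ C, IsGroupSubset G ∧ x ∈ G) ∧
    (∀ e ∈ C, e * e = e → ∀ s ∈ C, e * s = s * e)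

/-- A semigroup is a Clifford semigroup. -/
def IsCliffordSG (C : Type*) [Semigroup C] : Prop :=
  IsCliffordSubset (Set.univ : Set C)

/-- A semigroup is nilpotent: for some `d`, any two products of at least `d`
elements are equal. -/
def IsNilpotentSG (N : Type*) [Semigroup N] : Prop :=
  ∃ d : ℕ, ∀ (a b : N) (l l' : List N),
    d ≤ l.length + 1 → d ≤ l'.length + 1 → sgProd a l = sgProd b l'

/-!
Let `d` witness the nilpotency of `N` and let `J` be the set of products of at least `d` elements
of `S`. Then `J` is an ideal, and all its elements have the same `N`-component under `f`, so the
`C`-component of `f` embeds `J` into the Clifford semigroup `C`. A finite semigroup embedded in a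
Clifford semigroup is itself Clifford: idempotents stay central by injectivity, and if `x ^ m` is
idempotent then `x ^ (m + 1)` and `x` have the same image (an idempotent of a group is its
identity), so `x ^ (m + 1) = x` and the powers of `x` form a cyclic group, an image of `ℤ/m`.
-/

section Semigroup

variable {S T : Type*} [Semigroup S] [Semigroup T]

theorem mul_sgProd (s a : S) (l : List S) : s * sgProd a l = sgProd (s * a) l := by
  induction l generalizing a with
  | nil => rfl
  | cons b l ih => simp only [sgProd, List.foldl_cons] at ih ⊢; rw [ih, mul_assoc]

theorem sgProd_concat (a s : S) (l : List S) : sgProd a (l ++ [s]) = sgProd a l * s := by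
  simp [sgProd]

theorem map_sgProd {g : S → T} (hg : ∀ x y, g (x * y) = g x * g y) (a : S) (l : List S) :
    g (sgProd a l) = sgProd (g a) (l.map g) := by
  induction l generalizing a with
  | nil => rfl
  | cons b l ih => simp only [sgProd, List.foldl_cons, List.map_cons] at ih ⊢; rw [ih, hg]

theorem spow_succ (a : S) {k : ℕ} (hk : 1 ≤ k) : spow a (k + 1) = spow a k * a := by
  obtain ⟨n, rfl⟩ := Nat.exists_eq_add_of_le' hk
  rfl

theorem spow_add (a : S) {m k : ℕ} (hm : 1 ≤ m) (hk : 1 ≤ k) :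
    spow a (m + k) = spow a m * spow a k := by
  induction k, hk using Nat.le_induction with
  | base => exact spow_succ a hm
  | succ k hk ih =>
    rw [← add_assoc, spow_succ a (by omega), ih, spow_succ a hk, mul_assoc]

theorem map_spow {g : S → T} (hg : ∀ x y, g (x * y) = g x * g y) (a : S) :
    ∀ k, g (spow a k) = spow (g a) k
  | 0 => rfl
  | 1 => rfl
  | k + 2 => by rw [spow, hg, map_spow hg a (k + 1), spow]

theorem spow_mem {J : Set S} (hJ : ∀ x ∈ J, ∀ y ∈ J, x * y ∈ J) {a : S} (ha : a ∈ J) :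
    ∀ k, spow a k ∈ J
  | 0 => ha
  | 1 => ha
  | k + 2 => hJ _ (spow_mem hJ ha (k + 1)) _ ha

theorem exists_spow_mul_self [Finite S] (a : S) :
    ∃ m, 1 ≤ m ∧ spow a m * spow a m = spow a m := by
  let : TopologicalSpace S := ⊥
  have : DiscreteTopology S := ⟨rfl⟩
  obtain ⟨_, ⟨k, rfl⟩, hk⟩ := exists_idempotent_in_compact_subsemigroup
    (fun _ => continuous_of_discreteTopology) (Set.range fun k => spow a (k + 1))
    (Set.range_nonempty _) (Set.toFinite _).isCompact (by
      rintro _ ⟨i, rfl⟩ _ ⟨j, rfl⟩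
      exact ⟨i + j + 1, by rw [← spow_add a (by omega) (by omega)]; ring_nf⟩)
  exact ⟨k + 1, by omega, hk⟩

theorem spow_add_of_spow_succ_eq_self {a : S} {m : ℕ} (ha : spow a (m + 1) = a) {k : ℕ}
    (hk : 1 ≤ k) : spow a (k + m) = spow a k := by
  induction k, hk using Nat.le_induction with
  | base => rwa [add_comm]
  | succ k hk ih => rw [add_right_comm, spow_succ a (by omega), ih, spow_succ a hk]

theorem spow_add_mul_of_spow_succ_eq_self {a : S} {m : ℕ} (ha : spow a (m + 1) = a) {k : ℕ}
    (hk : 1 ≤ k) (j : ℕ) : spow a (k + m * j) = spow a k := by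
  induction j with
  | zero => simp
  | succ j ih => rw [mul_add_one, ← add_assoc, spow_add_of_spow_succ_eq_self ha (by omega), ih]

theorem spow_eq_of_modEq {a : S} {m : ℕ} (ha : spow a (m + 1) = a) {k k' : ℕ} (hk : 1 ≤ k)
    (hk' : 1 ≤ k') (h : k ≡ k' [MOD m]) : spow a k = spow a k' := by
  wlog hle : k ≤ k' generalizing k k'
  · exact (this hk' hk h.symm (by omega)).symm
  obtain ⟨j, hj⟩ := (Nat.modEq_iff_dvd' hle).mp h
  rw [show k' = k + m * j by omega, spow_add_mul_of_spow_succ_eq_self ha hk]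

end Semigroup

section GroupSubset

variable {S : Type*} [Semigroup S]

theorem isGroupSubset_range {G : Type*} [Group G] (φ : G → S)
    (hφ : ∀ a b, φ (a * b) = φ a * φ b) : IsGroupSubset (Set.range φ) := by
  refine ⟨?_, φ 1, ⟨1, rfl⟩, ?_, ?_⟩
  · rintro _ ⟨a, rfl⟩ _ ⟨b, rfl⟩
    exact ⟨a * b, hφ a b⟩
  · rintro _ ⟨a, rfl⟩
    simp only [← hφ, one_mul, mul_one, and_self]
  · rintro _ ⟨a, rfl⟩
    exact ⟨φ a⁻¹, ⟨a⁻¹, rfl⟩, by rw [← hφ, mul_inv_cancel], by rw [← hφ, inv_mul_cancel]⟩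

theorem exists_isGroupSubset_of_spow_succ_eq_self {a : S} {m : ℕ} (hm : 1 ≤ m)
    (ha : spow a (m + 1) = a) : ∃ G ⊆ Set.range (spow a), IsGroupSubset G ∧ a ∈ G := by
  have : NeZero m := ⟨by omega⟩
  have spow_eq : ∀ {k k' : ℕ}, 1 ≤ k → 1 ≤ k' → (k : ZMod m) = k' → spow a k = spow a k' :=
    fun hk hk' h => spow_eq_of_modEq ha hk hk' ((ZMod.natCast_eq_natCast_iff _ _ _).mp h)
  -- the shift by `m` keeps exponents positive, away from the junk value `spow a 0 = a`
  let φ : Multiplicative (ZMod m) → S := fun z => spow a (z.toAdd.val + m)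
  refine ⟨Set.range φ, Set.range_comp_subset_range _ _, isGroupSubset_range φ fun z w => ?_,
    Multiplicative.ofAdd 1, spow_eq (by omega) le_rfl (by simp)⟩
  rw [← spow_add a (by omega) (by omega)]
  exact spow_eq (by omega) (by omega) (by simp)

theorem IsGroupSubset.mul_eq_of_mul_self {G : Set S} (hG : IsGroupSubset G) {e : S} (he : e ∈ G)
    (hee : e * e = e) {x : S} (hx : x ∈ G) : e * x = x := by
  obtain ⟨-, u, -, hu, hinv⟩ := hG
  obtain ⟨y, -, hey, -⟩ := hinv e he
  have : e = u := by
    calc e = e * u := ((hu e he).2).symm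
      _ = e * e * y := by rw [← hey, mul_assoc]
      _ = u := by rw [hee, hey]
  exact this ▸ (hu x hx).1

theorem IsGroupSubset.spow_succ_eq_self {G : Set S} (hG : IsGroupSubset G) {a : S} (ha : a ∈ G)
    {m : ℕ} (hm : 1 ≤ m) (hidem : spow a m * spow a m = spow a m) : spow a (m + 1) = a := by
  rw [spow_add a hm le_rfl]
  exact hG.mul_eq_of_mul_self (spow_mem hG.1 ha m) hidem ha

end GroupSubset

theorem IsCliffordSG.isCliffordSubset_of_injOn {S C : Type*} [Semigroup S] [Finite S]
    [Semigroup C] (hC : IsCliffordSG C) {g : S → C} (hg : ∀ x y, g (x * y) = g x * g y)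
    {J : Set S} (hJ : ∀ x ∈ J, ∀ y ∈ J, x * y ∈ J) (hgJ : Set.InjOn g J) :
    IsCliffordSubset J := by
  refine ⟨hJ, fun a ha => ?_, fun e he hee s hs => ?_⟩
  · obtain ⟨m, hm, hidem⟩ := exists_spow_mul_self a
    obtain ⟨G, -, hG, hgaG⟩ := hC.2.1 (g a) trivial
    have hperiod : spow a (m + 1) = a := by
      refine hgJ (spow_mem hJ ha _) ha ?_
      rw [map_spow hg]
      exact hG.spow_succ_eq_self hgaG hm (by rw [← map_spow hg, ← hg, hidem])
    obtain ⟨G', hG'a, hG'⟩ := exists_isGroupSubset_of_spow_succ_eq_self hm hperiod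
    exact ⟨G', hG'a.trans (Set.range_subset_iff.mpr (spow_mem hJ ha)), hG'⟩
  · refine hgJ (hJ e he s hs) (hJ s hs e he) ?_
    rw [hg, hg, hC.2.2 (g e) trivial (by rw [← hg, hee]) (g s) trivial]

section LongProducts

variable {S : Type*} [Semigroup S]

variable (S) in
def longProds (d : ℕ) : Set S :=
  {x | ∃ a l, d ≤ l.length + 1 ∧ sgProd a l = x}

theorem mul_mem_longProds_left {d : ℕ} {x : S} (y : S) (hx : x ∈ longProds S d) :
    y * x ∈ longProds S d := by
  obtain ⟨a, l, hl, rfl⟩ := hx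
  exact ⟨y * a, l, hl, (mul_sgProd y a l).symm⟩

theorem mul_mem_longProds_right {d : ℕ} {x : S} (y : S) (hx : x ∈ longProds S d) :
    x * y ∈ longProds S d := by
  obtain ⟨a, l, hl, rfl⟩ := hx
  exact ⟨a, l ++ [y], by simp; omega, sgProd_concat a y l⟩

theorem isIdeal_longProds [Nonempty S] (d : ℕ) : IsIdeal (longProds S d) := by
  inhabit S
  exact ⟨⟨_, default, List.replicate d default, by simp, rfl⟩,
    fun y _ hx => ⟨mul_mem_longProds_left y hx, mul_mem_longProds_right y hx⟩⟩

theorem eq_of_mem_longProds {N : Type*} [Semigroup N] {d : ℕ}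
    (hd : ∀ (a b : N) (l l' : List N), d ≤ l.length + 1 → d ≤ l'.length + 1 →
      sgProd a l = sgProd b l')
    {g : S → N} (hg : ∀ x y, g (x * y) = g x * g y) {x y : S} (hx : x ∈ longProds S d)
    (hy : y ∈ longProds S d) : g x = g y := by
  obtain ⟨a, l, hl, rfl⟩ := hx
  obtain ⟨b, l', hl', rfl⟩ := hy
  rw [map_sgProd hg, map_sgProd hg]
  exact hd _ _ _ _ (by simpa using hl) (by simpa using hl')

end LongProducts

theorem stmt3_general {S C N : Type*} [Semigroup S] [Finite S] [Nonempty S]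
    [Semigroup C] [Semigroup N]
    (hC : IsCliffordSG C) (hN : IsNilpotentSG N)
    (f : S → C × N) (hinj : Function.Injective f)
    (hhom : ∀ x y : S, f (x * y) = f x * f y) :
    ∃ (J : Set S) (d : ℕ), IsIdeal J ∧ IsCliffordSubset J ∧
      ∀ (a : S) (l : List S), d ≤ l.length + 1 → sgProd a l ∈ J := by
  obtain ⟨d, hd⟩ := hN
  have fst_injOn : Set.InjOn (fun x => (f x).1) (longProds S d) := fun x hx y hy hxy =>
    hinj (Prod.ext hxy (eq_of_mem_longProds hd (g := fun x => (f x).2)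
      (fun x y => by rw [hhom]; rfl) hx hy))
  refine ⟨longProds S d, d, isIdeal_longProds d, ?_, fun a l hl => ⟨a, l, hl, rfl⟩⟩
  exact hC.isCliffordSubset_of_injOn (fun x y => by rw [hhom]; rfl)
    (fun x _ y hy => mul_mem_longProds_left x hy) fst_injOn

/-- A finite semigroup that embeds into a direct product of a
finite Clifford semigroup and a finite nilpotent semigroup is an ideal
extension of a Clifford semigroup by a nilpotent semigroup: there are an ideal
`J` of `S` that is a Clifford semigroup and `d ∈ ℕ` such that every product of
`d` (hence of at least `d`) elements of `S` lies in `J`. -/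
theorem stmt3 {S C N : Type*} [Semigroup S] [Finite S] [Nonempty S]
    [Semigroup C] [Finite C] [Semigroup N] [Finite N]
    (hC : IsCliffordSG C) (hN : IsNilpotentSG N)
    (f : S → C × N) (hinj : Function.Injective f)
    (hhom : ∀ x y : S, f (x * y) = f x * f y) :
    ∃ (J : Set S) (d : ℕ), IsIdeal J ∧ IsCliffordSubset J ∧
      ∀ (a : S) (l : List S), d ≤ l.length + 1 → sgProd a l ∈ J :=
  stmt3_general hC hN f hinj hhom
end

section
/- Let S be a finite Clifford semigroup, n ∈ ℕ, let A be a finite subset of S^n and b ∈ S^n. Let A' := { a ∈ A : b(i) ≤ a(i) for all i ∈ {1,…,n} }, where ≤ is the Clifford preorder on S. Then b belongs to the subsemigroup of S^n generated by A if and only if b belongs to the subsemigroup of S^n generated by A'. -/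
section Aux
variable {S : Type*} [Semigroup S]

private lemma spow_mul_absorb (w c : S) (h : w * c = w) : ∀ m, spow w m * c = spow w m
  | 0 => h
  | 1 => h
  | (n + 2) => by
      show spow w (n + 1) * w * c = spow w (n + 1) * w
      rw [mul_assoc, h]

private lemma clifford_central (hCl : IsCliffordSG S) {e : S} (he : e * e = e) (s : S) :
    e * s = s * e :=
  hCl.2.2 e (Set.mem_univ e) he s (Set.mem_univ s)

private lemma spow_mem_s11 {G : Set S} (hG : ∀ x ∈ G, ∀ y ∈ G, x * y ∈ G) {z : S} (hz : z ∈ G) :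
    ∀ m, spow z m ∈ G
  | 0 => hz
  | 1 => hz
  | (n + 2) => hG _ (spow_mem_s11 hG hz (n + 1)) _ hz

private lemma mul_E_self (hCl : IsCliffordSG S) (E : S → S)
    (hE : ∀ z : S, (∃ m, 1 ≤ m ∧ E z = spow z m) ∧ E z * E z = E z) (z : S) :
    z * E z = z := by
  obtain ⟨G, _, ⟨hGmul, e, heG, hid, hinv⟩, hzG⟩ := hCl.2.1 z (Set.mem_univ z)
  obtain ⟨m, _, hEz⟩ := (hE z).1
  have hEG : E z ∈ G := hEz ▸ spow_mem_s11 hGmul hzG m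
  obtain ⟨y, hyG, hy1, _⟩ := hinv (E z) hEG
  have hEe : E z = e := by
    calc E z = E z * e := ((hid (E z) hEG).2).symm
      _ = E z * (E z * y) := by rw [hy1]
      _ = (E z * E z) * y := (mul_assoc _ _ _).symm
      _ = E z * y := by rw [(hE z).2]
      _ = e := hy1
  rw [hEe]
  exact (hid z hzG).2

private lemma E_mul_absorb_left (hCl : IsCliffordSG S) (E : S → S)
    (hE : ∀ z : S, (∃ m, 1 ≤ m ∧ E z = spow z m) ∧ E z * E z = E z) (x y : S) :
    E (x * y) * E x = E (x * y) := by
  have hxy : (x * y) * E x = x * y := by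
    rw [mul_assoc, ← clifford_central hCl (hE x).2 y, ← mul_assoc,
      mul_E_self hCl E hE x]
  obtain ⟨m, _, hEw⟩ := (hE (x * y)).1
  rw [hEw]
  exact spow_mul_absorb _ _ hxy m

private lemma E_mul_absorb_right (hCl : IsCliffordSG S) (E : S → S)
    (hE : ∀ z : S, (∃ m, 1 ≤ m ∧ E z = spow z m) ∧ E z * E z = E z) (x y : S) :
    E (x * y) * E y = E (x * y) := by
  have hxy : (x * y) * E y = x * y := by
    rw [mul_assoc, mul_E_self hCl E hE y]
  obtain ⟨m, _, hEw⟩ := (hE (x * y)).1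
  rw [hEw]
  exact spow_mul_absorb _ _ hxy m

end Aux

/-- For a finite Clifford semigroup `S`, a finite `A ⊆ Sⁿ` and
`b ∈ Sⁿ`, with `A' := { a ∈ A | ∀ i, b i ≤ a i }` (Clifford preorder),
`b ∈ ⟨A⟩` iff `b ∈ ⟨A'⟩`. -/
theorem stmt11 {S : Type*} [Semigroup S] [Finite S] [Nonempty S]
    (hCl : IsCliffordSG S) (E : S → S)
    (hE : ∀ z : S, (∃ m, 1 ≤ m ∧ E z = spow z m) ∧ E z * E z = E z)
    (n : ℕ) (A : Set (Fin n → S)) (hA : A.Finite) (b : Fin n → S) :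
    b ∈ Subsemigroup.closure A ↔
      b ∈ Subsemigroup.closure {a | a ∈ A ∧ ∀ i, E (b i) * E (a i) = E (b i)} := by
  constructor
  · intro hb
    have main : ∀ x, x ∈ Subsemigroup.closure A →
        x ∈ Subsemigroup.closure {a | a ∈ A ∧ ∀ i, E (x i) * E (a i) = E (x i)} := by
      intro x hx
      induction hx using Subsemigroup.closure_induction with
      | mem a ha =>
        exact Subsemigroup.subset_closure ⟨ha, fun i => (hE (a i)).2⟩
      | mul x y hx hy px py =>
        have sub1 : {a | a ∈ A ∧ ∀ i, E (x i) * E (a i) = E (x i)} ⊆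
            {a | a ∈ A ∧ ∀ i, E ((x * y) i) * E (a i) = E ((x * y) i)} := by
          rintro a ⟨haA, hax⟩
          refine ⟨haA, fun i => ?_⟩
          have h1 : E ((x * y) i) * E (x i) = E ((x * y) i) :=
            E_mul_absorb_left hCl E hE (x i) (y i)
          calc E ((x * y) i) * E (a i) = (E ((x * y) i) * E (x i)) * E (a i) := by rw [h1]
            _ = E ((x * y) i) * (E (x i) * E (a i)) := mul_assoc _ _ _
            _ = E ((x * y) i) * E (x i) := by rw [hax i]
            _ = E ((x * y) i) := h1
        have sub2 : {a | a ∈ A ∧ ∀ i, E (y i) * E (a i) = E (y i)} ⊆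
            {a | a ∈ A ∧ ∀ i, E ((x * y) i) * E (a i) = E ((x * y) i)} := by
          rintro a ⟨haA, hay⟩
          refine ⟨haA, fun i => ?_⟩
          have h1 : E ((x * y) i) * E (y i) = E ((x * y) i) :=
            E_mul_absorb_right hCl E hE (x i) (y i)
          calc E ((x * y) i) * E (a i) = (E ((x * y) i) * E (y i)) * E (a i) := by rw [h1]
            _ = E ((x * y) i) * (E (y i) * E (a i)) := mul_assoc _ _ _
            _ = E ((x * y) i) * E (y i) := by rw [hay i]
            _ = E ((x * y) i) := h1
        exact Subsemigroup.mul_mem _ (Subsemigroup.closure_mono sub1 px)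
          (Subsemigroup.closure_mono sub2 py)
    exact main b hb
  · intro hb
    exact Subsemigroup.closure_mono (fun a ha => ha.1) hb
end

section
/- Let S be a finite commutative semigroup. Then there exists r ∈ ℕ, depending only on S, such that for all n, k ∈ ℕ and all a_1, …, a_k, b ∈ S^n: b belongs to the subsemigroup of S^n generated by {a_1, …, a_k} if and only if there exist exponents ℓ_1, …, ℓ_k ∈ {0, 1, …, r} with ℓ_1 + ⋯ + ℓ_k ≥ 1 and b = a_1^{ℓ_1} ⋯ a_k^{ℓ_k}. -/
lemma coe_spow {α : Type*} [Semigroup α] (a : α) (e : ℕ) :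
    (↑(spow a (e + 1)) : WithOne α) = (↑a : WithOne α) ^ (e + 1) := by
  induction e with
  | zero => simp [spow]
  | succ n ih =>
    show ((↑(spow a (n + 1) * a) : WithOne α)) = _
    rw [WithOne.coe_mul, ih]
    exact (pow_succ _ _).symm

lemma spow_apply {ι β : Type*} [Semigroup β] (x : ι → β) (e : ℕ) (i : ι) :
    spow x e i = spow (x i) e := by
  match e with
  | 0 => rfl
  | 1 => rfl
  | (n + 2) =>
    have ih := spow_apply x (n + 1) i
    show (spow x (n + 1) * x) i = spow (x i) (n + 1) * x i
    rw [Pi.mul_apply, ih]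

lemma spow_mem_s16 {α : Type*} [Semigroup α] {H : Subsemigroup α} {x : α} (hx : x ∈ H) (e : ℕ) :
    spow x e ∈ H := by
  match e with
  | 0 => exact hx
  | 1 => exact hx
  | (n + 2) => exact mul_mem (spow_mem_s16 hx (n + 1)) hx

lemma pow_stab {M : Type*} [Monoid M] (x : M) {i d : ℕ} (h : x ^ (i + d) = x ^ i) :
    ∀ c e, i ≤ e → x ^ (e + c * d) = x ^ e := by
  have step : ∀ e, i ≤ e → x ^ (e + d) = x ^ e := by
    intro e he
    obtain ⟨s, rfl⟩ := Nat.exists_eq_add_of_le he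
    rw [show i + s + d = (i + d) + s from by omega, pow_add, h, ← pow_add]
  intro c
  induction c with
  | zero => simp
  | succ c ih =>
    intro e he
    rw [show e + (c + 1) * d = (e + c * d) + d from by ring,
      step _ (le_trans he (Nat.le_add_right _ _)), ih e he]

lemma pow_reduce {M : Type*} [Monoid M] (x : M) {m p : ℕ} (hp : 1 ≤ p)
    (h : x ^ (m + p) = x ^ m) {e : ℕ} (he : m ≤ e) :
    x ^ e = x ^ (m + (e - m) % p) := by
  have key := pow_stab x h ((e - m) / p) (m + (e - m) % p) (Nat.le_add_right _ _)
  rw [← key]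
  congr 1
  have h1 := Nat.div_add_mod (e - m) p
  have h2 : (e - m) / p * p = p * ((e - m) / p) := Nat.mul_comm _ _
  omega

lemma finite_monoid_pow {M : Type*} [Monoid M] [Finite M] :
    ∃ m p : ℕ, 1 ≤ m ∧ 1 ≤ p ∧ ∀ x : M, x ^ (m + p) = x ^ m := by
  have : Nonempty M := ⟨1⟩
  set N := Nat.card M with hN
  have hN1 : 1 ≤ N := Nat.one_le_iff_ne_zero.mpr (Nat.card_ne_zero.mpr ⟨this, ‹Finite M›⟩)
  refine ⟨N, N.factorial, hN1, Nat.one_le_iff_ne_zero.mpr (Nat.factorial_ne_zero N), ?_⟩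
  intro x
  -- pigeonhole: ∃ i < j ≤ N with x ^ i = x ^ j
  have : ¬ Function.Injective (fun e : Fin (N + 1) => x ^ (e : ℕ)) := by
    intro hinj
    have := Nat.card_le_card_of_injective _ hinj
    simp only [Nat.card_eq_fintype_card, Fintype.card_fin] at this
    omega
  rw [Function.not_injective_iff] at this
  obtain ⟨i, j, hij, hne⟩ := this
  wlog hlt : (i : ℕ) < (j : ℕ) generalizing i j
  · have hv : (i : ℕ) ≠ (j : ℕ) := fun h => hne (Fin.ext h)
    exact this j i hij.symm hne.symm (by omega)
  have hjN : (j : ℕ) ≤ N := by have := j.isLt; omega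
  have hd : ((j : ℕ) - i) ∣ N.factorial := Nat.dvd_factorial (by omega) (by omega)
  obtain ⟨c, hc⟩ := hd
  have h' : x ^ ((i : ℕ) + ((j : ℕ) - i)) = x ^ (i : ℕ) := by
    rw [show (i : ℕ) + ((j : ℕ) - i) = (j : ℕ) from by omega]
    exact hij.symm
  have key := pow_stab x h' c N (by omega)
  rwa [show N + c * ((j : ℕ) - i) = N + N.factorial from by rw [hc]; ring] at key


/-- For a finite commutative semigroup `S` there is `r ∈ ℕ`
(depending only on `S`) such that for all `n, k` and `a₁, …, a_k, b ∈ Sⁿ`: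
`b ∈ ⟨a₁, …, a_k⟩` iff `b = a₁^{ℓ₁} ⋯ a_k^{ℓ_k}` for some exponents
`ℓ_j ∈ {0, …, r}` with `ℓ₁ + ⋯ + ℓ_k ≥ 1` (a zero exponent means the factor is
omitted; the product is taken in the monoid `WithOne Sⁿ`). -/
theorem stmt16 {S : Type*} [CommSemigroup S] [Finite S] [Nonempty S] :
    ∃ r : ℕ, ∀ (n k : ℕ) (a : Fin k → Fin n → S) (b : Fin n → S),
      b ∈ Subsemigroup.closure (Set.range a) ↔
        ∃ ℓ : Fin k → ℕ, (∀ j, ℓ j ≤ r) ∧ 1 ≤ ∑ j, ℓ j ∧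
          (↑b : WithOne (Fin n → S)) = ∏ j, (↑(a j) : WithOne (Fin n → S)) ^ ℓ j := by
  have : Fintype S := Fintype.ofFinite S
  have : Finite (WithOne S) :=
    haveI : Fintype (WithOne S) := inferInstanceAs (Fintype (Option S))
    Finite.of_fintype _
  obtain ⟨m, p, hm, hp, hmp⟩ := finite_monoid_pow (M := WithOne S)
  have keyS : ∀ s : S, spow s (m + p) = spow s m := by
    intro s
    apply WithOne.coe_inj.mp
    obtain ⟨m₀, rfl⟩ : ∃ m₀, m = m₀ + 1 := ⟨m - 1, by omega⟩
    rw [show m₀ + 1 + p = (m₀ + p) + 1 from by omega, coe_spow, coe_spow,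
      show m₀ + p + 1 = m₀ + 1 + p from by omega]
    exact hmp s
  refine ⟨m + p, fun n k a b => ?_⟩
  have keyP : ∀ x : Fin n → S, (↑x : WithOne (Fin n → S)) ^ (m + p) = (↑x) ^ m := by
    intro x
    have hx : spow x (m + p) = spow x m :=
      funext fun i => by rw [spow_apply, spow_apply, keyS]
    obtain ⟨m₀, hm₀⟩ : ∃ m₀, m = m₀ + 1 := ⟨m - 1, by omega⟩
    rw [hm₀, show m₀ + 1 + p = (m₀ + p) + 1 from by omega, ← coe_spow, ← coe_spow,
      show m₀ + p + 1 = m₀ + 1 + p from by omega, ← hm₀, hx]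
  set red : ℕ → ℕ := fun e => if e ≤ m + p then e else m + (e - m) % p with hred
  have red_le : ∀ e, red e ≤ m + p := by
    intro e
    simp only [hred]
    split
    · omega
    · have := Nat.mod_lt (e - m) (show 0 < p by omega)
      omega
  have red_pos : ∀ e, 1 ≤ e → 1 ≤ red e := by
    intro e he
    simp only [hred]
    split <;> omega
  have red_pow : ∀ (x : Fin n → S) (e : ℕ),
      (↑x : WithOne (Fin n → S)) ^ red e = (↑x : WithOne (Fin n → S)) ^ e := by
    intro x e
    simp only [hred]
    split
    · rfl
    · exact (pow_reduce (x := (↑x : WithOne (Fin n → S))) hp (keyP x) (by omega)).symm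
  constructor
  · intro hb
    induction hb using Subsemigroup.closure_induction with
    | mem x hx =>
      obtain ⟨j, rfl⟩ := hx
      refine ⟨fun j' => if j' = j then 1 else 0, fun j' => by dsimp only; split <;> omega, ?_, ?_⟩
      · calc (1 : ℕ) = ∑ j', if j' = j then 1 else 0 := by simp
          _ ≤ _ := le_refl _
      · rw [show (∏ j', (↑(a j') : WithOne (Fin n → S)) ^ (if j' = j then 1 else 0)) =
            ∏ j', (if j' = j then (↑(a j') : WithOne (Fin n → S)) else 1) from
          Finset.prod_congr rfl fun j' _ => by split <;> simp]
        simp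
    | mul x y hx hy ihx ihy =>
      obtain ⟨ℓ₁, h1le, h1s, h1p⟩ := ihx
      obtain ⟨ℓ₂, h2le, h2s, h2p⟩ := ihy
      refine ⟨fun j => red (ℓ₁ j + ℓ₂ j), fun j => red_le _, ?_, ?_⟩
      · obtain ⟨j, hj⟩ : ∃ j, 1 ≤ ℓ₁ j := by
          by_contra h
          push_neg at h
          have : ∀ j, ℓ₁ j = 0 := fun j => by have := h j; omega
          simp [this] at h1s
        calc (1 : ℕ) ≤ red (ℓ₁ j + ℓ₂ j) := red_pos _ (by omega)
          _ ≤ ∑ j', red (ℓ₁ j' + ℓ₂ j') := Finset.single_le_sum (f := fun j' => red (ℓ₁ j' + ℓ₂ j'))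
              (fun _ _ => Nat.zero_le _) (Finset.mem_univ j)
      · rw [WithOne.coe_mul, h1p, h2p, ← Finset.prod_mul_distrib]
        exact Finset.prod_congr rfl fun j _ => by rw [red_pow, pow_add]
  · rintro ⟨ℓ, hle, hs, hb⟩
    set C := Subsemigroup.closure (Set.range a) with hC
    set T : Submonoid (WithOne (Fin n → S)) :=
      { carrier := {1} ∪ (WithOne.coe : (Fin n → S) → WithOne (Fin n → S)) '' (C : Set (Fin n → S))
        one_mem' := Or.inl rfl
        mul_mem' := by
          rintro x y (rfl | ⟨c, hc, rfl⟩) (rfl | ⟨d, hd, rfl⟩)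
          · exact Or.inl (one_mul 1)
          · exact Or.inr ⟨d, hd, by rw [one_mul]⟩
          · exact Or.inr ⟨c, hc, by rw [mul_one]⟩
          · exact Or.inr ⟨c * d, mul_mem hc hd, (WithOne.coe_mul c d).symm⟩ } with hT
    have hfac : ∀ j : Fin k, (↑(a j) : WithOne (Fin n → S)) ^ ℓ j ∈
        ({1} : Set (WithOne (Fin n → S))) ∪
        (WithOne.coe : (Fin n → S) → WithOne (Fin n → S)) '' (C : Set (Fin n → S)) := by
      intro j
      rcases Nat.eq_zero_or_pos (ℓ j) with h0 | h1
      · rw [h0, pow_zero]; exact Or.inl rfl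
      · obtain ⟨e, hej⟩ : ∃ e, ℓ j = e + 1 := ⟨ℓ j - 1, by omega⟩
        rw [hej]
        refine Or.inr ⟨spow (a j) (e + 1), ?_, ?_⟩
        · exact spow_mem_s16 (Subsemigroup.subset_closure (Set.mem_range_self j)) (e + 1)
        · exact coe_spow _ _
    have hmem : (∏ j, (↑(a j) : WithOne (Fin n → S)) ^ ℓ j) ∈ T := by
      apply Submonoid.prod_mem
      intro j _
      exact hfac j
    rw [← hb] at hmem
    have hmem' : (↑b : WithOne (Fin n → S)) ∈ ({1} : Set (WithOne (Fin n → S))) ∪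
        (WithOne.coe : (Fin n → S) → WithOne (Fin n → S)) '' (C : Set (Fin n → S)) := hmem
    rcases hmem' with h1 | ⟨c, hc, hbc⟩
    · exact absurd h1 (WithOne.coe_ne_one)
    · exact (WithOne.coe_inj.mp hbc) ▸ hc
end
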